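/- (Break conditions, Theorem 5.3.) Fix Y ∈ ℤ, 1 ≤ r ≤ D, 1 ≤ d < D, and a category pattern c = (c_1,…,c_d) ∈ {lt, eq, gt}^d with n1, n2, n3 the numbers of lt, eq, gt entries respectively, such that the event E = {cat(Z_1) = c_1, …, cat(Z_d) = c_d} ∩ {os_r(Z) = Y} has positive probability. Suppose one of the following holds: (1) n2 ≥ 1 and n1 = r − 1; (2) n2 ≥ 1 and n3 = D − r; (3) n2 = max(r − n1, D − r − n3 + 1). Then, conditional on E, the remaining variables Z_{d+1}, …, Z_D are i.i.d. with pmf g, where in case (1) g(z) = f(z)·1{z ≥ Y}/(1 − F(Y−1)); in case (2) g(z) = f(z)·1{z ≤ Y}/F(Y); and in case (3) g = f. Equivalently, for all (z_{d+1},…,z_D) ∈ ℤ^{D−d}: P(Z_{d+1} = z_{d+1}, …, Z_D = z_D ∧ E) = P(E) · ∏_{t=d+1}^{D} g(z_t). -/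

import Mathlib

open MeasureTheory

/-- The measure on ℤ with mass function `f`. -/
noncomputable def parentMeasure (f : ℤ → ℝ) : Measure ℤ :=
  Measure.count.withDensity fun z => ENNReal.ofReal (f z)

/-- `P f D S` is the probability of the event `S` under the `D`-fold product of the
measure on ℤ with pmf `f`, i.e. the law of `D` i.i.d. draws `Z = (Z_1, …, Z_D)` from `f`. -/
noncomputable def P (f : ℤ → ℝ) (D : ℕ) (S : Set (Fin D → ℤ)) : ℝ :=
  (Measure.pi (fun _ : Fin D => parentMeasure f) S).toReal

/-- The CDF of `f`: `F(y) = ∑_{t ≤ y} f(t)`. -/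
noncomputable def Fcdf (f : ℤ → ℝ) (y : ℤ) : ℝ := ∑' z : {t : ℤ // t ≤ y}, f z.1

/-- The number of entries of `z` that are `≤ y`. -/
def countLe {n : ℕ} (z : Fin n → ℤ) (y : ℤ) : ℕ :=
  (Finset.univ.filter fun i => z i ≤ y).card

/-- `osEq r z Y` says that the `r`-th smallest entry of `z` (counting multiplicity)
equals `Y`: the `r`-th order statistic is `≤ Y` but not `≤ Y - 1`. -/
def osEq {n : ℕ} (r : ℕ) (z : Fin n → ℤ) (Y : ℤ) : Prop :=
  r ≤ countLe z Y ∧ countLe z (Y - 1) < r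

/-- The order-statistic CDF `F^{(a,m)}(y) = ∑_{t=a}^{m} (m choose t) F(y)^t (1−F(y))^{m−t}`. -/
noncomputable def osCDF (f : ℤ → ℝ) (a m : ℕ) (y : ℤ) : ℝ :=
  ∑ t ∈ Finset.Icc a m, (m.choose t : ℝ) * Fcdf f y ^ t * (1 - Fcdf f y) ^ (m - t)

/-- The three categories of an integer relative to a fixed value `Y`. -/
inductive Cat3 where
  | lt : Cat3
  | eq : Cat3
  | gt : Cat3
deriving DecidableEq

/-- The category of `z` relative to `Y`. -/
def catOf (Y z : ℤ) : Cat3 := if z < Y then Cat3.lt else if z = Y then Cat3.eq else Cat3.gt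

/-!
Once the categories of the first `d` draws are fixed, `os_r(Z) = Y` only depends on how many of
the remaining draws are `< Y` and `≤ Y`. Under each break condition this count condition says
exactly that every remaining draw lies in one set `A` (`[Y, ∞)`, `(-∞, Y]` or `ℤ`), so `E` and
`E ∩ {Z_{d+1..D} = w}` are both rectangles for the product measure. Their probabilities factor,
and the ratio of the factors of the remaining coordinates is `∏ₜ f(wₜ) 1_A(wₜ) / μ(A)`.
-/

open Finset

section FrontBack

variable {D d : ℕ} (hdD : d ≤ D)

def finSplit : Fin d ⊕ Fin (D - d) ≃ Fin D :=
  finSumFinEquiv.trans (finCongr (Nat.add_sub_cancel' hdD))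

@[simp]
lemma finSplit_inl (t : Fin d) : finSplit hdD (.inl t) = Fin.castLE hdD t := rfl

@[simp]
lemma finSplit_inr (t : Fin (D - d)) :
    finSplit hdD (.inr t) = ⟨d + t, by omega⟩ := rfl

@[to_additive]
lemma Fin.prod_univ_front_back {M : Type*} [CommMonoid M] (g : Fin D → M) :
    ∏ i, g i = (∏ t : Fin d, g (Fin.castLE hdD t)) *
      ∏ t : Fin (D - d), g ⟨d + t, by omega⟩ := by
  rw [← (finSplit hdD).prod_comp, Fintype.prod_sum_type]
  simp

lemma card_filter_front_back (p : Fin D → Prop) [DecidablePred p] :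
    #{i | p i} = #{t : Fin d | p (Fin.castLE hdD t)} +
      #{t : Fin (D - d) | p ⟨d + t, by omega⟩} := by
  simp only [card_filter]
  exact Fin.sum_univ_front_back hdD _

variable {α : Type*} [MeasurableSpace α] (μ : Measure α)

lemma measure_pi_front_back [SigmaFinite μ] (s : Fin d → Set α) (u : Fin (D - d) → Set α) :
    Measure.pi (fun _ : Fin D => μ)
        {ω | (∀ t, ω (Fin.castLE hdD t) ∈ s t) ∧
          ∀ t : Fin (D - d), ω ⟨d + t, by omega⟩ ∈ u t} =
      (∏ t, μ (s t)) * ∏ t, μ (u t) := by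
  have hrect : {ω : Fin D → α | (∀ t, ω (Fin.castLE hdD t) ∈ s t) ∧
      ∀ t : Fin (D - d), ω ⟨d + t, by omega⟩ ∈ u t} =
      Set.univ.pi fun i => Sum.elim s u ((finSplit hdD).symm i) := by
    ext ω
    simp only [Set.mem_pi, Set.mem_univ, true_implies, ← (finSplit hdD).forall_congr_right,
      Equiv.symm_apply_apply, Sum.forall, Sum.elim_inl, Sum.elim_inr, finSplit_inl, finSplit_inr,
      Set.mem_ofPred_eq]
  rw [hrect, Measure.pi_pi, Fin.prod_univ_front_back hdD]
  congr 2 <;> funext t <;> congr 1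
  · rw [← finSplit_inl hdD, Equiv.symm_apply_apply, Sum.elim_inl]
  · rw [← finSplit_inr hdD, Equiv.symm_apply_apply, Sum.elim_inr]

lemma measureReal_pi_back_eq_front_back [IsFiniteMeasure μ] (s : Fin d → Set α) (A : Set α)
    (w : Fin (D - d) → α) :
    (Measure.pi fun _ : Fin D => μ).real
        {ω | (∀ t : Fin (D - d), ω ⟨d + t, by omega⟩ = w t) ∧
          (∀ t, ω (Fin.castLE hdD t) ∈ s t) ∧
          ∀ t : Fin (D - d), ω ⟨d + t, by omega⟩ ∈ A} =
      (Measure.pi fun _ : Fin D => μ).real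
          {ω | (∀ t, ω (Fin.castLE hdD t) ∈ s t) ∧
            ∀ t : Fin (D - d), ω ⟨d + t, by omega⟩ ∈ A} *
        ∏ t, μ.real ({w t} ∩ A) / μ.real A := by
  have hjoint : {ω : Fin D → α | (∀ t : Fin (D - d), ω ⟨d + t, by omega⟩ = w t) ∧
      (∀ t, ω (Fin.castLE hdD t) ∈ s t) ∧
      ∀ t : Fin (D - d), ω ⟨d + t, by omega⟩ ∈ A} =
      {ω | (∀ t, ω (Fin.castLE hdD t) ∈ s t) ∧
        ∀ t : Fin (D - d), ω ⟨d + t, by omega⟩ ∈ {w t} ∩ A} := by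
    ext ω
    simp only [Set.mem_ofPred_eq, Set.mem_inter_iff, Set.mem_singleton_iff, forall_and]
    tauto
  -- also when `μ.real A = 0`, as then `μ.real ({w t} ∩ A) = 0` and `x / 0 = 0`
  have hcancel (t : Fin (D - d)) :
      μ.real ({w t} ∩ A) = μ.real A * (μ.real ({w t} ∩ A) / μ.real A) :=
    (mul_div_cancel_of_imp' fun h => measureReal_mono_null Set.inter_subset_right h).symm
  simp only [measureReal_def, hjoint, measure_pi_front_back, ENNReal.toReal_mul,
    ENNReal.toReal_prod]
  simp only [← measureReal_def]
  rw [Finset.prod_congr rfl fun t _ => hcancel t, prod_mul_distrib, prod_const, card_univ,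
    Fintype.card_fin, mul_assoc]

end FrontBack

section ParentMeasure

variable {f : ℤ → ℝ}

lemma parentMeasure_apply (A : Set ℤ) :
    parentMeasure f A = ∑' z : A, ENNReal.ofReal (f z) := by
  rw [parentMeasure, withDensity_apply _ .of_discrete,
    ← lintegral_indicator .of_discrete, lintegral_count, ← _root_.tsum_subtype]

lemma parentMeasure_real_apply (hf0 : ∀ z, 0 ≤ f z) (hf : Summable f) (A : Set ℤ) :
    (parentMeasure f).real A = ∑' z : A, f z := by
  rw [measureReal_def, parentMeasure_apply,
    ← ENNReal.ofReal_tsum_of_nonneg (fun z : A => hf0 z) (hf.subtype A),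
    ENNReal.toReal_ofReal (tsum_nonneg fun z : A => hf0 z)]

lemma parentMeasure_real_singleton_inter (hf0 : ∀ z, 0 ≤ f z) (w : ℤ) (A : Set ℤ) :
    (parentMeasure f).real ({w} ∩ A) = A.indicator f w := by
  by_cases hw : w ∈ A
  · rw [Set.indicator_of_mem hw, Set.singleton_inter_of_mem hw, measureReal_def,
      parentMeasure_apply, tsum_singleton w fun z => ENNReal.ofReal (f z),
      ENNReal.toReal_ofReal (hf0 w)]
  · rw [Set.indicator_of_notMem hw, Set.singleton_inter_of_notMem hw, measureReal_empty]

lemma isProbabilityMeasure_parentMeasure (hf0 : ∀ z, 0 ≤ f z) (hf1 : HasSum f 1) :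
    IsProbabilityMeasure (parentMeasure f) := by
  rw [isProbabilityMeasure_iff, ← ENNReal.ofReal_one, ← hf1.tsum_eq, parentMeasure_apply,
    ENNReal.ofReal_tsum_of_nonneg hf0 hf1.summable, tsum_univ fun z => ENNReal.ofReal (f z)]

lemma parentMeasure_real_Iic (hf0 : ∀ z, 0 ≤ f z) (hf1 : HasSum f 1) (y : ℤ) :
    (parentMeasure f).real (Set.Iic y) = Fcdf f y :=
  parentMeasure_real_apply hf0 hf1.summable _

lemma parentMeasure_real_Ici (hf0 : ∀ z, 0 ≤ f z) (hf1 : HasSum f 1) (y : ℤ) :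
    (parentMeasure f).real (Set.Ici y) = 1 - Fcdf f (y - 1) := by
  have := isProbabilityMeasure_parentMeasure hf0 hf1
  rw [← parentMeasure_real_Iic hf0 hf1, ← probReal_compl_eq_one_sub measurableSet_Iic,
    Set.compl_Iic, Set.Ioi_sub_one_eq_Ici]

end ParentMeasure

section Categories

variable {ι : Type*} [Fintype ι]

lemma card_catOf_lt (Y : ℤ) (x : ι → ℤ) : #{t | catOf Y (x t) = .lt} = #{t | x t < Y} := by
  congr 1
  refine filter_congr fun t _ => ?_
  unfold catOf
  split_ifs <;> simp_all

lemma card_catOf_lt_add_card_catOf_eq (Y : ℤ) (x : ι → ℤ) :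
    #{t | catOf Y (x t) = .lt} + #{t | catOf Y (x t) = .eq} = #{t | x t ≤ Y} := by
  simp only [card_filter, ← sum_add_distrib]
  refine sum_congr rfl fun t _ => ?_
  unfold catOf
  split_ifs <;> first | omega | contradiction

lemma card_lt_add_card_eq_add_card_gt (c : ι → Cat3) :
    #{t | c t = .lt} + #{t | c t = .eq} + #{t | c t = .gt} = Fintype.card ι := by
  simp only [card_filter]
  rw [← sum_add_distrib, ← sum_add_distrib, ← card_univ, card_eq_sum_ones]
  exact sum_congr rfl fun t _ => by cases c t <;> rfl

end Categories

section Pattern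

variable {Y : ℤ} {D d r : ℕ} (hdD : d ≤ D) {c : Fin d → Cat3} {ω : Fin D → ℤ}

lemma osEq_iff_of_catOf (hc : ∀ t, catOf Y (ω (Fin.castLE hdD t)) = c t) :
    osEq r ω Y ↔
      r ≤ #{t | c t = .lt} + #{t | c t = .eq} +
          #{t : Fin (D - d) | ω ⟨d + t, by omega⟩ ≤ Y} ∧
        #{t | c t = .lt} + #{t : Fin (D - d) | ω ⟨d + t, by omega⟩ < Y} < r := by
  obtain rfl : (fun t => catOf Y (ω (Fin.castLE hdD t))) = c := funext hc
  rw [card_catOf_lt_add_card_catOf_eq, card_catOf_lt]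
  simp only [osEq, countLe, card_filter_front_back hdD, Int.le_sub_one_iff]

lemma osEq_iff_forall_mem_Ici_of_catOf (hr1 : 1 ≤ r)
    (hc : ∀ t, catOf Y (ω (Fin.castLE hdD t)) = c t)
    (hn2 : 1 ≤ #{t | c t = .eq}) (hn1 : #{t | c t = .lt} = r - 1) :
    osEq r ω Y ↔ ∀ t : Fin (D - d), ω ⟨d + t, by omega⟩ ∈ Set.Ici Y := by
  have hnone : #{t : Fin (D - d) | ω ⟨d + t, by omega⟩ < Y} = 0 ↔
      ∀ t : Fin (D - d), ω ⟨d + t, by omega⟩ ∈ Set.Ici Y := by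
    simp
  rw [osEq_iff_of_catOf hdD hc, ← hnone]
  omega

lemma osEq_iff_forall_mem_Iic_of_catOf (hrD : r ≤ D)
    (hc : ∀ t, catOf Y (ω (Fin.castLE hdD t)) = c t)
    (hn2 : 1 ≤ #{t | c t = .eq}) (hn3 : #{t | c t = .gt} = D - r) :
    osEq r ω Y ↔ ∀ t : Fin (D - d), ω ⟨d + t, by omega⟩ ∈ Set.Iic Y := by
  have hall : #{t : Fin (D - d) | ω ⟨d + t, by omega⟩ ≤ Y} = D - d ↔
      ∀ t : Fin (D - d), ω ⟨d + t, by omega⟩ ∈ Set.Iic Y := by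
    simpa using card_filter_eq_iff (s := (univ : Finset (Fin (D - d))))
  have hle := card_filter_le (univ : Finset (Fin (D - d)))
    fun t => ω ⟨d + t, by omega⟩ ≤ Y
  have hlt := card_filter_le (univ : Finset (Fin (D - d)))
    fun t => ω ⟨d + t, by omega⟩ < Y
  have htotal := card_lt_add_card_eq_add_card_gt c
  simp only [card_univ, Fintype.card_fin] at hle hlt htotal
  rw [osEq_iff_of_catOf hdD hc, ← hall]
  omega

lemma osEq_of_catOf (hc : ∀ t, catOf Y (ω (Fin.castLE hdD t)) = c t)
    (hn : #{t | c t = .eq} = max (r - #{t | c t = .lt}) (D - r - #{t | c t = .gt} + 1)) :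
    osEq r ω Y := by
  have hlt := card_filter_le (univ : Finset (Fin (D - d)))
    fun t => ω ⟨d + t, by omega⟩ < Y
  have htotal := card_lt_add_card_eq_add_card_gt c
  simp only [card_univ, Fintype.card_fin] at hlt htotal
  rw [osEq_iff_of_catOf hdD hc]
  omega

end Pattern

lemma P_back_eq_inter_eq_mul_prod {f : ℤ → ℝ} (hf0 : ∀ z, 0 ≤ f z) (hf1 : HasSum f 1)
    {Y : ℤ} {D r d : ℕ} (hdD : d ≤ D) (c : Fin d → Cat3) (A : Set ℤ)
    (hA : ∀ ω : Fin D → ℤ, (∀ t, catOf Y (ω (Fin.castLE hdD t)) = c t) →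
      (osEq r ω Y ↔ ∀ t : Fin (D - d), ω ⟨d + t, by omega⟩ ∈ A))
    (w : Fin (D - d) → ℤ) :
    P f D {ω | (∀ t : Fin (D - d), ω ⟨d + t, by omega⟩ = w t) ∧
        (∀ t : Fin d, catOf Y (ω (Fin.castLE hdD t)) = c t) ∧ osEq r ω Y} =
      P f D {ω | (∀ t : Fin d, catOf Y (ω (Fin.castLE hdD t)) = c t) ∧ osEq r ω Y} *
        ∏ t, A.indicator f (w t) / (parentMeasure f).real A := by
  have := isProbabilityMeasure_parentMeasure hf0 hf1
  have hE : {ω : Fin D → ℤ | (∀ t : Fin d, catOf Y (ω (Fin.castLE hdD t)) = c t) ∧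
      osEq r ω Y} = {ω | (∀ t, ω (Fin.castLE hdD t) ∈ {z | catOf Y z = c t}) ∧
        ∀ t : Fin (D - d), ω ⟨d + t, by omega⟩ ∈ A} := by
    ext ω
    exact and_congr_right (hA ω)
  have hJ : {ω : Fin D → ℤ | (∀ t : Fin (D - d), ω ⟨d + t, by omega⟩ = w t) ∧
      (∀ t : Fin d, catOf Y (ω (Fin.castLE hdD t)) = c t) ∧ osEq r ω Y} =
      {ω | (∀ t : Fin (D - d), ω ⟨d + t, by omega⟩ = w t) ∧
        (∀ t, ω (Fin.castLE hdD t) ∈ {z | catOf Y z = c t}) ∧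
        ∀ t : Fin (D - d), ω ⟨d + t, by omega⟩ ∈ A} := by
    ext ω
    exact and_congr_right fun _ => and_congr_right (hA ω)
  simp only [P, ← measureReal_def, hE, hJ, measureReal_pi_back_eq_front_back,
    parentMeasure_real_singleton_inter hf0]

/-- **Theorem 5.3** (break conditions): suppose the event
`E = {cat(Z_1) = c_1, …, cat(Z_d) = c_d} ∩ {os_r(Z) = Y}` has positive probability, and let
`n1, n2, n3` be the numbers of `lt`, `eq`, `gt` entries of the pattern `c`.  If
(1) `n2 ≥ 1` and `n1 = r − 1`, or (2) `n2 ≥ 1` and `n3 = D − r`, or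
(3) `n2 = max(r − n1, D − r − n3 + 1)`, then conditional on `E`, the remaining draws
`Z_{d+1}, …, Z_D` are i.i.d. with pmf `g`, where `g` is respectively `f` truncated to
`[Y, ∞)`, `f` truncated to `(−∞, Y]`, or `f` itself; equivalently, the displayed
product formulas for the joint probabilities hold. -/
theorem order_statistic_break_conditions
    (f : ℤ → ℝ) (hf0 : ∀ z, 0 ≤ f z) (hf1 : HasSum f 1)
    (Y : ℤ) (D r d : ℕ) (hr1 : 1 ≤ r) (hrD : r ≤ D) (hdD : d < D)
    (c : Fin d → Cat3) :
    ((1 ≤ (Finset.univ.filter fun t => c t = Cat3.eq).card ∧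
        (Finset.univ.filter fun t => c t = Cat3.lt).card = r - 1) →
      ∀ w : Fin (D - d) → ℤ,
        P f D {ω | (∀ t : Fin (D - d), ω ⟨d + t.1, by have := t.isLt; omega⟩ = w t) ∧
            (∀ t : Fin d, catOf Y (ω (Fin.castLE hdD.le t)) = c t) ∧ osEq r ω Y}
          = P f D {ω | (∀ t : Fin d, catOf Y (ω (Fin.castLE hdD.le t)) = c t) ∧
                osEq r ω Y} *
              ∏ t : Fin (D - d),
                (if Y ≤ w t then f (w t) / (1 - Fcdf f (Y - 1)) else 0)) ∧
    ((1 ≤ (Finset.univ.filter fun t => c t = Cat3.eq).card ∧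
        (Finset.univ.filter fun t => c t = Cat3.gt).card = D - r) →
      ∀ w : Fin (D - d) → ℤ,
        P f D {ω | (∀ t : Fin (D - d), ω ⟨d + t.1, by have := t.isLt; omega⟩ = w t) ∧
            (∀ t : Fin d, catOf Y (ω (Fin.castLE hdD.le t)) = c t) ∧ osEq r ω Y}
          = P f D {ω | (∀ t : Fin d, catOf Y (ω (Fin.castLE hdD.le t)) = c t) ∧
                osEq r ω Y} *
              ∏ t : Fin (D - d),
                (if w t ≤ Y then f (w t) / Fcdf f Y else 0)) ∧
    (((Finset.univ.filter fun t => c t = Cat3.eq).card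
        = max (r - (Finset.univ.filter fun t => c t = Cat3.lt).card)
              (D - r - (Finset.univ.filter fun t => c t = Cat3.gt).card + 1)) →
      ∀ w : Fin (D - d) → ℤ,
        P f D {ω | (∀ t : Fin (D - d), ω ⟨d + t.1, by have := t.isLt; omega⟩ = w t) ∧
            (∀ t : Fin d, catOf Y (ω (Fin.castLE hdD.le t)) = c t) ∧ osEq r ω Y}
          = P f D {ω | (∀ t : Fin d, catOf Y (ω (Fin.castLE hdD.le t)) = c t) ∧
                osEq r ω Y} *
              ∏ t : Fin (D - d), f (w t)) := by
  have hP := P_back_eq_inter_eq_mul_prod (Y := Y) (r := r) hf0 hf1 hdD.le c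
  refine ⟨fun ⟨hn2, hn1⟩ w => ?_, fun ⟨hn2, hn3⟩ w => ?_, fun hn w => ?_⟩
  · rw [hP (Set.Ici Y) (fun ω hc => osEq_iff_forall_mem_Ici_of_catOf hdD.le hr1 hc hn2 hn1) w,
      parentMeasure_real_Ici hf0 hf1]
    simp only [Set.indicator_apply, Set.mem_Ici, ite_div, zero_div]
  · rw [hP (Set.Iic Y) (fun ω hc => osEq_iff_forall_mem_Iic_of_catOf hdD.le hrD hc hn2 hn3) w,
      parentMeasure_real_Iic hf0 hf1]
    simp only [Set.indicator_apply, Set.mem_Iic, ite_div, zero_div]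
  · have := isProbabilityMeasure_parentMeasure hf0 hf1
    rw [hP Set.univ (fun ω hc => iff_of_true (osEq_of_catOf hdD.le hc hn) fun _ => trivial) w,
      probReal_univ]
    simp only [Set.indicator_univ, div_one]
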